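/- With Y₁,Y₂,Y₃ derivations satisfying [Y_a,Y_b] = -ε_{abc}Y_c, define (curl h)_a = ε_{abc} Y_b h_c + h_a and div h = ∑_a Y_a h_a. Then div (curl h) = 0 for every triple h of smooth functions. -/
import Mathlib


/-- The Levi-Civita symbol on three indices. -/
def ε : Fin 3 → Fin 3 → Fin 3 → ℝ
  | 0, 1, 2 => 1
  | 1, 2, 0 => 1
  | 2, 0, 1 => 1
  | 2, 1, 0 => -1
  | 1, 0, 2 => -1
  | 0, 2, 1 => -1
  | _, _, _ => 0

/-- If `Y₁, Y₂, Y₃` are derivations satisfying `[Y_a, Y_b] = -ε_{abc} Y_c`, and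
`(curl h)_a = ∑ ε_{abc} Y_b h_c + h_a`, `div h = ∑ Y_a h_a`, then `div (curl h) = 0`
for every triple `h`. -/
theorem stmt_1 {A : Type*} [CommRing A] [Algebra ℝ A]
    (Y : Fin 3 → Derivation ℝ A A)
    (hY : ∀ a b : Fin 3, ∀ x : A,
      Y a (Y b x) - Y b (Y a x) = -∑ c, ε a b c • Y c x)
    (h : Fin 3 → A) :
    ∑ a, Y a ((∑ b, ∑ c, ε a b c • Y b (h c)) + h a) = 0 := by
  have e : ∀ a b c : Fin 3, ε a b c = ε a b c := fun _ _ _ => rfl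
  have H1 := hY 0 1 (h 2)
  have H2 := hY 2 0 (h 1)
  have H3 := hY 1 2 (h 0)
  simp only [Fin.sum_univ_three, show ε 0 1 2 = 1 from rfl, show ε 1 2 0 = 1 from rfl,
    show ε 2 0 1 = 1 from rfl, show ε 2 1 0 = -1 from rfl, show ε 1 0 2 = -1 from rfl,
    show ε 0 2 1 = -1 from rfl, show ε 0 0 0 = 0 from rfl, show ε 0 0 1 = 0 from rfl,
    show ε 0 0 2 = 0 from rfl, show ε 0 1 0 = 0 from rfl, show ε 0 1 1 = 0 from rfl,
    show ε 0 2 0 = 0 from rfl, show ε 0 2 2 = 0 from rfl, show ε 1 0 0 = 0 from rfl,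
    show ε 1 0 1 = 0 from rfl, show ε 1 1 0 = 0 from rfl, show ε 1 1 1 = 0 from rfl,
    show ε 1 1 2 = 0 from rfl, show ε 1 2 1 = 0 from rfl, show ε 1 2 2 = 0 from rfl,
    show ε 2 0 0 = 0 from rfl, show ε 2 0 2 = 0 from rfl, show ε 2 1 1 = 0 from rfl,
    show ε 2 1 2 = 0 from rfl, show ε 2 2 0 = 0 from rfl, show ε 2 2 1 = 0 from rfl,
    show ε 2 2 2 = 0 from rfl, one_smul, zero_smul, neg_smul, neg_neg,
    zero_add, add_zero, neg_add_rev] at H1 H2 H3 ⊢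
  simp only [map_add, map_neg, map_sub]
  linear_combination (norm := ring_nf) H1 + H2 + H3
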